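/- arXiv:2604.12457 — 5 statements merged into one kernel-verified Lean document; each statement's English description precedes it below -/
import Mathlib

section
/- If u and v are nonnegative vectors in R^m of norm 1 (with respect to the l1-norm) having the same support, then the l1-norm of u - v is at most the Hilbert projective distance between u and v. -/
/-- l1 norm of a vector in ℝ^m. -/
noncomputable def l1 {m : ℕ} (v : Fin m → ℝ) : ℝ := ∑ i, |v i|

/-- Support of a vector: the set of indices where it is positive. -/
noncomputable def supp {m : ℕ} (v : Fin m → ℝ) : Finset (Fin m) :=
  Finset.univ.filter fun i => 0 < v i

/-- Hilbert projective distance between two vectors with common nonempty support `E`. -/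
noncomputable def dH {m : ℕ} (E : Finset (Fin m)) (hE : E.Nonempty) (u v : Fin m → ℝ) : ℝ :=
  Real.log (E.sup' hE fun i => u i / v i) + Real.log (E.sup' hE fun i => v i / u i)

lemma key_pospart {m : ℕ} (E : Finset (Fin m)) (hE : E.Nonempty) (u v : Fin m → ℝ)
    (hup : ∀ i ∈ E, 0 < u i) (hvp : ∀ i ∈ E, 0 < v i)
    (hsu : ∑ i ∈ E, u i = 1) (hsv : ∑ i ∈ E, v i = 1) :
    ∑ i ∈ E, max (u i - v i) 0 ≤ Real.log (E.sup' hE fun i => u i / v i) := by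
  set M := E.sup' hE fun i => u i / v i with hM
  have hle : ∀ i ∈ E, u i ≤ M * v i := by
    intro i hi
    have h := Finset.le_sup' (fun i => u i / v i) hi
    exact (div_le_iff₀ (hvp i hi)).mp h
  have hM1 : 1 ≤ M := by
    calc 1 = ∑ i ∈ E, u i := hsu.symm
    _ ≤ ∑ i ∈ E, M * v i := Finset.sum_le_sum hle
    _ = M * ∑ i ∈ E, v i := by rw [Finset.mul_sum]
    _ = M := by rw [hsv, mul_one]
  have hM0 : 0 < M := lt_of_lt_of_le one_pos hM1
  have hterm : ∀ i ∈ E, max (u i - v i) 0 ≤ u i * (1 - M⁻¹) := by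
    intro i hi
    have h1 : u i * M⁻¹ ≤ v i := by
      have h := hle i hi
      rw [mul_comm] at h
      calc u i * M⁻¹ ≤ (v i * M) * M⁻¹ :=
            mul_le_mul_of_nonneg_right h (inv_nonneg.mpr hM0.le)
        _ = v i := by field_simp
    apply max_le
    · nlinarith [hup i hi]
    · nlinarith [hup i hi, inv_le_one_of_one_le₀ hM1]
  calc ∑ i ∈ E, max (u i - v i) 0 ≤ ∑ i ∈ E, u i * (1 - M⁻¹) :=
        Finset.sum_le_sum hterm
    _ = 1 - M⁻¹ := by rw [← Finset.sum_mul, hsu, one_mul]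
    _ ≤ Real.log M := by
        have := Real.log_le_sub_one_of_pos (inv_pos.mpr hM0)
        rw [Real.log_inv] at this
        linarith

/-- If `u` and `v` are nonnegative vectors of l1-norm 1 with the same support,
then `‖u - v‖₁ ≤ d_H(u,v)`. -/
theorem stmt0 {m : ℕ} (u v : Fin m → ℝ) (hu : 0 ≤ u) (hv : 0 ≤ v)
    (hu1 : l1 u = 1) (hv1 : l1 v = 1)
    (E : Finset (Fin m)) (hE : E.Nonempty) (hsu : supp u = E) (hsv : supp v = E) :
    l1 (u - v) ≤ dH E hE u v := by
  have hmu : ∀ i, i ∈ E ↔ 0 < u i := by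
    intro i; rw [← hsu]; simp [supp]
  have hmv : ∀ i, i ∈ E ↔ 0 < v i := by
    intro i; rw [← hsv]; simp [supp]
  have hu0 : ∀ i ∉ E, u i = 0 := fun i hi =>
    le_antisymm (not_lt.mp fun h => hi ((hmu i).mpr h)) (hu i)
  have hv0 : ∀ i ∉ E, v i = 0 := fun i hi =>
    le_antisymm (not_lt.mp fun h => hi ((hmv i).mpr h)) (hv i)
  have hsumu : ∑ i ∈ E, u i = 1 := by
    rw [← hu1, l1, ← Finset.sum_subset (Finset.subset_univ E)]
    · exact Finset.sum_congr rfl fun i hi => (abs_of_nonneg (hu i)).symm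
    · intro i _ hi; rw [abs_of_nonneg (hu i), hu0 i hi]
  have hsumv : ∑ i ∈ E, v i = 1 := by
    rw [← hv1, l1, ← Finset.sum_subset (Finset.subset_univ E)]
    · exact Finset.sum_congr rfl fun i hi => (abs_of_nonneg (hv i)).symm
    · intro i _ hi; rw [abs_of_nonneg (hv i), hv0 i hi]
  have hsplit : l1 (u - v) =
      (∑ i ∈ E, max (u i - v i) 0) + ∑ i ∈ E, max (v i - u i) 0 := by
    rw [l1, ← Finset.sum_add_distrib,
      ← Finset.sum_subset (Finset.subset_univ E)]
    · refine Finset.sum_congr rfl fun i _ => ?_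
      have : (u - v) i = u i - v i := rfl
      rw [this]
      rcases le_total (u i) (v i) with h | h
      · rw [abs_of_nonpos (by linarith), max_eq_right (by linarith),
          max_eq_left (by linarith)]; ring
      · rw [abs_of_nonneg (by linarith), max_eq_left (by linarith),
          max_eq_right (by linarith)]; ring
    · intro i _ hi
      have : (u - v) i = u i - v i := rfl
      rw [this, hu0 i hi, hv0 i hi]; simp
  rw [hsplit, dH]
  gcongr
  · exact key_pospart E hE u v (fun i hi => (hmu i).mp hi) (fun i hi => (hmv i).mp hi) hsumu hsumv
  · exact key_pospart E hE v u (fun i hi => (hmv i).mp hi) (fun i hi => (hmu i).mp hi) hsumv hsumu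
end

section
/- Let u, v be nonnegative vectors in R^m with common nonempty support, and let M be a nonnegative m×m matrix. Then uM and vM have the same support, and if this support is nonempty, d_H(uM, vM) ≤ d_H(u, v). -/
/-- Product of matrices along a word. -/
noncomputable def Mprod {A : Type*} {m : ℕ} (M : A → Matrix (Fin m) (Fin m) ℝ)
    (w : List A) : Matrix (Fin m) (Fin m) ℝ := (w.map M).prod

lemma mem_supp {m : ℕ} (v : Fin m → ℝ) (i : Fin m) : i ∈ supp v ↔ 0 < v i := by
  simp [supp]

lemma key {m : ℕ} (u v : Fin m → ℝ) (hu : 0 ≤ u) (hv : 0 ≤ v)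
    (E : Finset (Fin m)) (hE : E.Nonempty) (hsu : supp u = E) (hsv : supp v = E)
    (M : Matrix (Fin m) (Fin m) ℝ) (hM : ∀ i j, 0 ≤ M i j) :
    ∀ j, Matrix.vecMul u M j ≤ (E.sup' hE fun i => u i / v i) * Matrix.vecMul v M j := by
  intro j
  set a := E.sup' hE fun i => u i / v i with ha
  have hub : ∀ i, u i ≤ a * v i := by
    intro i
    by_cases hi : i ∈ E
    · have hvi : 0 < v i := (mem_supp v i).1 (hsv ▸ hi)
      have hui := Finset.le_sup' (fun i => u i / v i) hi
      calc u i = (u i / v i) * v i := by field_simp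
        _ ≤ a * v i := by
            apply mul_le_mul_of_nonneg_right hui hvi.le
    · have hvi : v i = 0 := by
        have := (mem_supp v i).not.1 (hsv ▸ hi)
        linarith [show (0:ℝ) ≤ v i from hv i, not_lt.mp this]
      have hui : u i = 0 := by
        have := (mem_supp u i).not.1 (hsu ▸ hi)
        linarith [show (0:ℝ) ≤ u i from hu i, not_lt.mp this]
      simp [hui, hvi]
  simp only [Matrix.vecMul, dotProduct, Finset.mul_sum]
  apply Finset.sum_le_sum
  intro i _
  rw [← mul_assoc]
  exact mul_le_mul_of_nonneg_right (hub i) (hM i j)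

lemma sup_pos {m : ℕ} (u v : Fin m → ℝ) (hu : 0 ≤ u)
    (E : Finset (Fin m)) (hE : E.Nonempty) (hsu : supp u = E) (hsv : supp v = E) :
    0 < E.sup' hE fun i => u i / v i := by
  obtain ⟨i, hi⟩ := hE
  have hui : 0 < u i := (mem_supp u i).1 (hsu ▸ hi)
  have hvi : 0 < v i := (mem_supp v i).1 (hsv ▸ hi)
  exact lt_of_lt_of_le (div_pos hui hvi) (Finset.le_sup' (fun i => u i / v i) hi)

/-- Nonnegative linear maps preserve supports and do not increase the Hilbert distance. -/
theorem stmt1 {m : ℕ} (u v : Fin m → ℝ) (hu : 0 ≤ u) (hv : 0 ≤ v)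
    (E : Finset (Fin m)) (hE : E.Nonempty) (hsu : supp u = E) (hsv : supp v = E)
    (M : Matrix (Fin m) (Fin m) ℝ) (hM : ∀ i j, 0 ≤ M i j) :
    supp (Matrix.vecMul u M) = supp (Matrix.vecMul v M) ∧
      ∀ h : (supp (Matrix.vecMul u M)).Nonempty,
        dH (supp (Matrix.vecMul u M)) h (Matrix.vecMul u M) (Matrix.vecMul v M) ≤
          dH E hE u v := by
  set a := E.sup' hE fun i => u i / v i with ha
  set b := E.sup' hE fun i => v i / u i with hb
  have ha_pos : 0 < a := sup_pos u v hu E hE hsu hsv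
  have hb_pos : 0 < b := sup_pos v u hv E hE hsv hsu
  have h1 := key u v hu hv E hE hsu hsv M hM
  have h2 := key v u hv hu E hE hsv hsu M hM
  have hunn : ∀ j, 0 ≤ Matrix.vecMul u M j := by
    intro j
    simp only [Matrix.vecMul, dotProduct]
    exact Finset.sum_nonneg fun i _ => mul_nonneg (show (0:ℝ) ≤ u i from hu i) (hM i j)
  have hvnn : ∀ j, 0 ≤ Matrix.vecMul v M j := by
    intro j
    simp only [Matrix.vecMul, dotProduct]
    exact Finset.sum_nonneg fun i _ => mul_nonneg (show (0:ℝ) ≤ v i from hv i) (hM i j)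
  have hss : supp (Matrix.vecMul u M) = supp (Matrix.vecMul v M) := by
    ext j
    simp only [mem_supp]
    constructor
    · intro hj
      nlinarith [h1 j, hvnn j]
    · intro hj
      nlinarith [h2 j, hunn j]
  refine ⟨hss, fun h => ?_⟩
  set F := supp (Matrix.vecMul u M) with hF
  have hpos : ∀ j ∈ F, 0 < Matrix.vecMul u M j ∧ 0 < Matrix.vecMul v M j := by
    intro j hj
    exact ⟨(mem_supp _ j).1 hj, (mem_supp _ j).1 (hss ▸ hj)⟩
  unfold dH
  have hs1 : (F.sup' h fun j => Matrix.vecMul u M j / Matrix.vecMul v M j) ≤ a := by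
    apply Finset.sup'_le
    intro j hj
    exact (div_le_iff₀ (hpos j hj).2).2 (h1 j)
  have hs2 : (F.sup' h fun j => Matrix.vecMul v M j / Matrix.vecMul u M j) ≤ b := by
    apply Finset.sup'_le
    intro j hj
    exact (div_le_iff₀ (hpos j hj).1).2 (h2 j)
  obtain ⟨j0, hj0⟩ := h
  have hp1 : 0 < (F.sup' ⟨j0, hj0⟩ fun j => Matrix.vecMul u M j / Matrix.vecMul v M j) :=
    lt_of_lt_of_le (div_pos (hpos j0 hj0).1 (hpos j0 hj0).2)
      (Finset.le_sup' (fun j => Matrix.vecMul u M j / Matrix.vecMul v M j) hj0)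
  have hp2 : 0 < (F.sup' ⟨j0, hj0⟩ fun j => Matrix.vecMul v M j / Matrix.vecMul u M j) :=
    lt_of_lt_of_le (div_pos (hpos j0 hj0).2 (hpos j0 hj0).1)
      (Finset.le_sup' (fun j => Matrix.vecMul v M j / Matrix.vecMul u M j) hj0)
  exact add_le_add (Real.log_le_log hp1 hs1) (Real.log_le_log hp2 hs2)
end

section
/- Let (M_a)_{a∈A} be a superfair family of nonnegative m×m matrices. Define, for a nonzero nonnegative vector u, Δ(u) = min(1, ln||u|| - (1/|A|) Σ_{a∈A} ln||u M_a||), and for a nonnegative vector v and word w, Γ^v(w) = Σ_{w' strict prefix of w} Δ(v M_{w'}). Then L^v + Γ^v is a supermartingale, where L^v(w) = ln||v M_w|| (with ln 0 = -∞). -/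
/-- Extended logarithm with `ln 0 = -∞`. -/
noncomputable def eLog (x : ℝ) : EReal := if x ≤ 0 then ⊥ else ((Real.log x : ℝ) : EReal)

/-- The bounded risk measure `Δ(u) = min(1, ln‖u‖ - (1/|A|) ∑ₐ ln‖u Mₐ‖)`. -/
noncomputable def Delta {A : Type*} [Fintype A] {m : ℕ}
    (M : A → Matrix (Fin m) (Fin m) ℝ) (u : Fin m → ℝ) : EReal :=
  min 1 (eLog (l1 u) -
    (((Fintype.card A : ℝ)⁻¹ : ℝ) : EReal) * ∑ a, eLog (l1 (Matrix.vecMul u (M a))))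

/-- The cumulative risk `Γ^v(w) = ∑_{w' ⊏ w} Δ(v M_{w'})`. -/
noncomputable def Gamma {A : Type*} [Fintype A] {m : ℕ}
    (M : A → Matrix (Fin m) (Fin m) ℝ) (v : Fin m → ℝ) (w : List A) : EReal :=
  ∑ i ∈ Finset.range w.length, Delta M (Matrix.vecMul v (Mprod M (w.take i)))

-- helper lemmas

lemma l1_nonneg {m : ℕ} (v : Fin m → ℝ) : 0 ≤ l1 v :=
  Finset.sum_nonneg fun _ _ => abs_nonneg _

lemma ereal_sum_bot {ι : Type*} {s : Finset ι} {f : ι → EReal} {a : ι}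
    (ha : a ∈ s) (h : f a = ⊥) : ∑ i ∈ s, f i = ⊥ := by
  classical
  rw [← Finset.add_sum_erase s f ha, h, EReal.bot_add]

lemma ereal_coe_sum {ι : Type*} (s : Finset ι) (f : ι → ℝ) :
    ((∑ i ∈ s, f i : ℝ) : EReal) = ∑ i ∈ s, ((f i : ℝ) : EReal) := by
  classical
  induction s using Finset.induction with
  | empty => simp
  | @insert x s hx ih => rw [Finset.sum_insert hx, Finset.sum_insert hx, EReal.coe_add, ih]

lemma ereal_coe_min (x y : ℝ) : ((min x y : ℝ) : EReal) = min (x : EReal) (y : EReal) := by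
  rcases le_total x y with h | h
  · rw [min_eq_left h, min_eq_left (EReal.coe_le_coe_iff.2 h)]
  · rw [min_eq_right h, min_eq_right (EReal.coe_le_coe_iff.2 h)]

lemma Mprod_nonneg {A : Type*} {m : ℕ} (M : A → Matrix (Fin m) (Fin m) ℝ)
    (hM : ∀ a i j, 0 ≤ M a i j) (w : List A) : ∀ i j, 0 ≤ Mprod M w i j := by
  induction w with
  | nil => intro i j; simp [Mprod, Matrix.one_apply]; split <;> norm_num
  | cons a w ih =>
      intro i j
      have : Mprod M (a :: w) = M a * Mprod M w := by
        simp [Mprod, List.prod_cons]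
      rw [this, Matrix.mul_apply]
      exact Finset.sum_nonneg fun k _ => mul_nonneg (hM a i k) (ih k j)

lemma vecMul_nonneg' {m : ℕ} {u : Fin m → ℝ} {N : Matrix (Fin m) (Fin m) ℝ}
    (hu : 0 ≤ u) (hN : ∀ i j, 0 ≤ N i j) : 0 ≤ Matrix.vecMul u N := by
  intro j
  simp only [Matrix.vecMul, dotProduct, Pi.zero_apply]
  exact Finset.sum_nonneg fun i _ => mul_nonneg (hu i) (hN i j)

lemma Gamma_ne_top {A : Type*} [Fintype A] {m : ℕ}
    (M : A → Matrix (Fin m) (Fin m) ℝ) (v : Fin m → ℝ) (w : List A) :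
    Gamma M v w ≠ ⊤ := by
  rw [Gamma]
  induction (Finset.range w.length) using Finset.induction with
  | empty => simp
  | @insert x t h ih =>
      rw [Finset.sum_insert h]
      have h1 : Delta M (Matrix.vecMul v (Mprod M (List.take x w))) ≠ ⊤ := by
        refine (lt_of_le_of_lt (min_le_left _ _) ?_).ne
        rw [show (1 : EReal) = ((1 : ℝ) : EReal) by norm_cast]
        exact EReal.coe_lt_top 1
      exact (EReal.add_lt_top h1 ih).ne

lemma Gamma_append {A : Type*} [Fintype A] {m : ℕ}
    (M : A → Matrix (Fin m) (Fin m) ℝ) (v : Fin m → ℝ) (w : List A) (a : A) :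
    Gamma M v (w ++ [a]) = Gamma M v w + Delta M (Matrix.vecMul v (Mprod M w)) := by
  rw [Gamma, Gamma]
  have hl : (w ++ [a]).length = w.length + 1 := by simp
  rw [hl, Finset.sum_range_succ]
  congr 1
  · apply Finset.sum_congr rfl
    intro i hi
    rw [List.take_append_of_le_length (le_of_lt (Finset.mem_range.1 hi))]
  · rw [List.take_append_of_le_length le_rfl, List.take_length]


/-- `L^v + Γ^v` is a supermartingale, where `L^v(w) = ln ‖v M_w‖` with `ln 0 = -∞`. -/
theorem stmt6 {A : Type*} [Fintype A] [Nonempty A] {m : ℕ}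
    (M : A → Matrix (Fin m) (Fin m) ℝ) (hM : ∀ a i j, 0 ≤ M a i j)
    (hsf : ∀ u : Fin m → ℝ, 0 ≤ u →
      ∑ a, l1 (Matrix.vecMul u (M a)) ≤ (Fintype.card A : ℝ) * l1 u)
    (v : Fin m → ℝ) (hv : 0 ≤ v) :
    ∀ w : List A,
      ∑ a, (eLog (l1 (Matrix.vecMul v (Mprod M (w ++ [a])))) + Gamma M v (w ++ [a])) ≤
        (Fintype.card A : EReal) *
          (eLog (l1 (Matrix.vecMul v (Mprod M w))) + Gamma M v w) := by
  intro w
  set u : Fin m → ℝ := Matrix.vecMul v (Mprod M w) with hudef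
  have hu0 : 0 ≤ u := vecMul_nonneg' hv (Mprod_nonneg M hM w)
  have key : ∀ a, Matrix.vecMul v (Mprod M (w ++ [a])) = Matrix.vecMul u (M a) := by
    intro a
    have : Mprod M (w ++ [a]) = Mprod M w * M a := by
      simp [Mprod]
    rw [this, hudef, Matrix.vecMul_vecMul]
  simp only [key, Gamma_append]
  set c : ℕ := Fintype.card A with hc
  have hcpos : (0 : ℝ) < (c : ℝ) := by
    exact_mod_cast Fintype.card_pos
  have hG := Gamma_ne_top M v w
  obtain a₀ : A := Classical.arbitrary A
  -- case Gamma = ⊥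
  by_cases hGb : Gamma M v w = ⊥
  · have : ∀ a : A, eLog (l1 (Matrix.vecMul u (M a))) + (Gamma M v w + Delta M u) = ⊥ := by
      intro a; rw [hGb, EReal.bot_add, EReal.add_bot]
    rw [ereal_sum_bot (Finset.mem_univ a₀) (this a₀)]
    exact bot_le
  obtain ⟨g, hg⟩ : ∃ g : ℝ, Gamma M v w = (g : EReal) :=
    ⟨(Gamma M v w).toReal, (EReal.coe_toReal hG hGb).symm⟩
  -- case l1 u = 0
  by_cases hlu : l1 u ≤ 0
  · have hlu0 : l1 u = 0 := le_antisymm hlu (l1_nonneg u)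
    have hall : ∀ a : A, l1 (Matrix.vecMul u (M a)) = 0 := by
      have h1 := hsf u hu0
      rw [hlu0, mul_zero] at h1
      intro a
      have := Finset.sum_nonneg (s := Finset.univ)
        (f := fun a => l1 (Matrix.vecMul u (M a))) (fun b _ => l1_nonneg _)
      have := (Finset.sum_eq_zero_iff_of_nonneg (fun b _ => l1_nonneg _)).1
        (le_antisymm h1 this) a (Finset.mem_univ a)
      exact this
    have hbot : eLog (l1 (Matrix.vecMul u (M a₀))) + (Gamma M v w + Delta M u) = ⊥ := by
      rw [hall a₀]; simp [eLog, EReal.bot_add]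
    rw [ereal_sum_bot (Finset.mem_univ a₀) hbot]
    exact bot_le
  push_neg at hlu
  -- case some l1 (u M a) = 0
  by_cases hex : ∃ a : A, l1 (Matrix.vecMul u (M a)) ≤ 0
  · obtain ⟨a, ha⟩ := hex
    have hbot : eLog (l1 (Matrix.vecMul u (M a))) + (Gamma M v w + Delta M u) = ⊥ := by
      simp [eLog, ha, EReal.bot_add]
    rw [ereal_sum_bot (Finset.mem_univ a) hbot]
    exact bot_le
  push_neg at hex
  -- main case: everything finite
  have heL : eLog (l1 u) = ((Real.log (l1 u) : ℝ) : EReal) := by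
    rw [eLog, if_neg (not_le.2 hlu)]
  have heLa : ∀ a : A, eLog (l1 (Matrix.vecMul u (M a)))
      = ((Real.log (l1 (Matrix.vecMul u (M a))) : ℝ) : EReal) := by
    intro a; rw [eLog, if_neg (not_le.2 (hex a))]
  set L : ℝ := Real.log (l1 u) with hL
  set S : ℝ := ∑ a, Real.log (l1 (Matrix.vecMul u (M a))) with hS
  have hsum : (∑ a, eLog (l1 (Matrix.vecMul u (M a)))) = ((S : ℝ) : EReal) := by
    rw [Finset.sum_congr rfl fun a _ => heLa a, hS, ereal_coe_sum]
  have hDelta : Delta M u = ((min 1 (L - (c : ℝ)⁻¹ * S) : ℝ) : EReal) := by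
    rw [Delta, hsum, heL, ← hc]
    rw [ereal_coe_min]
    norm_cast
  calc ∑ a, (eLog (l1 (Matrix.vecMul u (M a))) + (Gamma M v w + Delta M u))
      = ((S + c * (g + min 1 (L - (c : ℝ)⁻¹ * S)) : ℝ) : EReal) := by
        have hterm : ∀ a : A, eLog (l1 (Matrix.vecMul u (M a))) + (Gamma M v w + Delta M u)
            = ((Real.log (l1 (Matrix.vecMul u (M a)))
                + (g + min 1 (L - (c : ℝ)⁻¹ * S)) : ℝ) : EReal) := by
          intro a
          rw [heLa a, hg, hDelta]
          norm_cast
        rw [Finset.sum_congr rfl fun a _ => hterm a, ← ereal_coe_sum,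
          EReal.coe_eq_coe_iff]
        rw [Finset.sum_add_distrib, Finset.sum_const, Finset.card_univ, ← hc,
          nsmul_eq_mul, ← hS]
    _ ≤ ((c * (L + g) : ℝ) : EReal) := by
        rw [EReal.coe_le_coe_iff]
        have hmin : min 1 (L - (c : ℝ)⁻¹ * S) ≤ L - (c : ℝ)⁻¹ * S := min_le_right _ _
        have h2 : (c : ℝ) * min 1 (L - (c : ℝ)⁻¹ * S) ≤ (c : ℝ) * (L - (c : ℝ)⁻¹ * S) :=
          mul_le_mul_of_nonneg_left hmin hcpos.le
        have h3 : (c : ℝ) * (L - (c : ℝ)⁻¹ * S) = (c : ℝ) * L - S := by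
          field_simp
        linarith [h2, h3]
    _ = (Fintype.card A : EReal) * (eLog (l1 u) + Gamma M v w) := by
        rw [heL, hg, ← hc]
        rw [← EReal.coe_coe_eq_natCast]
        norm_cast
end

section
/- For all sufficiently small ε > 0: if u and v are nonnegative vectors with ||u|| = ||v||, equal support, and d_H(u,v) ≤ ε, then |Live(u) - Live(v)| ≤ 3ε·||u||. -/
/-- The cone of "non-betting" vectors: nonnegative vectors whose l1-norm is preserved
by multiplication by every word `M_z`. -/
def Scone {A : Type*} {m : ℕ} (M : A → Matrix (Fin m) (Fin m) ℝ) : Set (Fin m → ℝ) :=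
  {s | 0 ≤ s ∧ ∀ z : List A, l1 (Matrix.vecMul s (Mprod M z)) = l1 s}

/-- The "live" part of the capital of a nonnegative vector: the l1-norm minus the
largest norm of a non-betting vector dominated by `v`. -/
noncomputable def Live {A : Type*} {m : ℕ} (M : A → Matrix (Fin m) (Fin m) ℝ)
    (v : Fin m → ℝ) : ℝ :=
  l1 v - sSup (l1 '' {s | s ∈ Scone M ∧ s ≤ v})

lemma l1_mono {m : ℕ} {s u : Fin m → ℝ} (hs : 0 ≤ s) (h : s ≤ u) : l1 s ≤ l1 u :=
  Finset.sum_le_sum fun i _ => by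
    rw [abs_of_nonneg (hs i), abs_of_nonneg ((hs i).trans (h i))]; exact h i

lemma l1_smul {m : ℕ} {c : ℝ} (hc : 0 ≤ c) (v : Fin m → ℝ) : l1 (c • v) = c * l1 v := by
  unfold l1
  rw [Finset.mul_sum]
  refine Finset.sum_congr rfl fun i _ => ?_
  simp [abs_mul, abs_of_nonneg hc]

lemma Scone_zero {A : Type*} {m : ℕ} (M : A → Matrix (Fin m) (Fin m) ℝ) :
    (0 : Fin m → ℝ) ∈ Scone M := by
  refine ⟨le_refl _, fun z => ?_⟩
  rw [Matrix.zero_vecMul]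

lemma Scone_smul {A : Type*} {m : ℕ} {M : A → Matrix (Fin m) (Fin m) ℝ}
    {s : Fin m → ℝ} (hs : s ∈ Scone M) {c : ℝ} (hc : 0 ≤ c) : c • s ∈ Scone M := by
  obtain ⟨h0, hz⟩ := hs
  refine ⟨fun i => mul_nonneg hc (h0 i), fun z => ?_⟩
  rw [Matrix.smul_vecMul, l1_smul hc, l1_smul hc, hz]

/-- abbreviation for the sup in Live -/
noncomputable def Ssup {A : Type*} {m : ℕ} (M : A → Matrix (Fin m) (Fin m) ℝ)
    (v : Fin m → ℝ) : ℝ := sSup (l1 '' {s | s ∈ Scone M ∧ s ≤ v})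

lemma Ssup_nonneg {A : Type*} {m : ℕ} (M : A → Matrix (Fin m) (Fin m) ℝ)
    {v : Fin m → ℝ} (hv : 0 ≤ v) : 0 ≤ Ssup M v := by
  have h0 : (0 : ℝ) ∈ l1 '' {s | s ∈ Scone M ∧ s ≤ v} := by
    refine ⟨0, ⟨Scone_zero M, hv⟩, by simp [l1]⟩
  refine le_csSup ⟨l1 v, ?_⟩ h0
  rintro x ⟨s, ⟨⟨hs0, _⟩, hsv⟩, rfl⟩
  exact l1_mono hs0 hsv

lemma Ssup_le_l1 {A : Type*} {m : ℕ} (M : A → Matrix (Fin m) (Fin m) ℝ)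
    {v : Fin m → ℝ} (hv : 0 ≤ v) : Ssup M v ≤ l1 v := by
  refine Real.sSup_le ?_ (l1_nonneg v)
  rintro x ⟨s, ⟨⟨hs0, _⟩, hsv⟩, rfl⟩
  exact l1_mono hs0 hsv

lemma Ssup_le_mul {A : Type*} {m : ℕ} (M : A → Matrix (Fin m) (Fin m) ℝ)
    {u v : Fin m → ℝ} {c : ℝ} (hc : 1 ≤ c) (hv : 0 ≤ v)
    (huv : ∀ i, u i ≤ c * v i) : Ssup M u ≤ c * Ssup M v := by
  have hc0 : (0 : ℝ) < c := lt_of_lt_of_le one_pos hc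
  refine Real.sSup_le ?_ (mul_nonneg hc0.le (Ssup_nonneg M hv))
  rintro x ⟨s, ⟨hsC, hsu⟩, rfl⟩
  have hmem : c⁻¹ • s ∈ {s | s ∈ Scone M ∧ s ≤ v} := by
    refine ⟨Scone_smul hsC (inv_nonneg.mpr hc0.le), fun i => ?_⟩
    have : s i ≤ c * v i := (hsu i).trans (huv i)
    have := (div_le_iff₀' hc0).mpr this
    simpa [Pi.smul_apply, smul_eq_mul, inv_mul_eq_div] using this
  have hb : BddAbove (l1 '' {s | s ∈ Scone M ∧ s ≤ v}) := by
    refine ⟨l1 v, ?_⟩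
    rintro x ⟨s, ⟨⟨hs0, _⟩, hsv⟩, rfl⟩
    exact l1_mono hs0 hsv
  have h1 : l1 (c⁻¹ • s) ≤ Ssup M v := le_csSup hb ⟨c⁻¹ • s, hmem, rfl⟩
  rw [l1_smul (inv_nonneg.mpr hc0.le)] at h1
  calc l1 s = c * (c⁻¹ * l1 s) := by field_simp
    _ ≤ c * Ssup M v := by
        exact mul_le_mul_of_nonneg_left h1 hc0.le

lemma mem_supp_iff {m : ℕ} {v : Fin m → ℝ} {i : Fin m} : i ∈ supp v ↔ 0 < v i := by
  simp [supp]

lemma sup_div_ge_one {m : ℕ} {E : Finset (Fin m)} (hE : E.Nonempty) {u v : Fin m → ℝ}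
    (hu : 0 ≤ u) (hv : 0 ≤ v) (hn : l1 u = l1 v) (hsu : supp u = E) (hsv : supp v = E) :
    1 ≤ E.sup' hE fun i => u i / v i := by
  by_contra hlt
  push_neg at hlt
  have key : ∀ i, u i ≤ v i ∧ (i ∈ E → u i < v i) := by
    intro i
    by_cases hi : i ∈ E
    · have hui : 0 < u i := mem_supp_iff.mp (hsu ▸ hi)
      have hvi : 0 < v i := mem_supp_iff.mp (hsv ▸ hi)
      have hle : u i / v i ≤ E.sup' hE fun i => u i / v i := Finset.le_sup' (fun i => u i / v i) hi
      have : u i / v i < 1 := lt_of_le_of_lt hle hlt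
      have : u i < v i := by
        rw [div_lt_one hvi] at this; exact this
      exact ⟨this.le, fun _ => this⟩
    · have h1 : u i = 0 := by
        by_contra h
        exact hi (hsu ▸ mem_supp_iff.mpr (lt_of_le_of_ne (hu i) (Ne.symm h)))
      have h2 : v i = 0 := by
        by_contra h
        exact hi (hsv ▸ mem_supp_iff.mpr (lt_of_le_of_ne (hv i) (Ne.symm h)))
      exact ⟨by rw [h1, h2], fun hmem => absurd hmem hi⟩
  obtain ⟨i0, hi0⟩ := hE
  have hstrict : l1 u < l1 v := by
    unfold l1
    refine Finset.sum_lt_sum (fun i _ => ?_) ⟨i0, Finset.mem_univ i0, ?_⟩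
    · rw [abs_of_nonneg (hu i), abs_of_nonneg (hv i)]; exact (key i).1
    · rw [abs_of_nonneg (hu i0), abs_of_nonneg (hv i0)]; exact (key i0).2 hi0
  exact absurd hn hstrict.ne

lemma dH_le_imp {m : ℕ} {E : Finset (Fin m)} (hE : E.Nonempty) {u v : Fin m → ℝ} {ε : ℝ}
    (hu : 0 ≤ u) (hv : 0 ≤ v) (hn : l1 u = l1 v) (hsu : supp u = E) (hsv : supp v = E)
    (hd : dH E hE u v ≤ ε) : ∀ i, u i ≤ Real.exp ε * v i := by
  set a := E.sup' hE fun i => u i / v i with ha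
  set b := E.sup' hE fun i => v i / u i with hb
  have ha1 : 1 ≤ a := sup_div_ge_one hE hu hv hn hsu hsv
  have hb1 : 1 ≤ b := sup_div_ge_one hE hv hu hn.symm hsv hsu
  have hla : Real.log a ≤ ε := by
    have h2 : Real.log a + Real.log b ≤ ε := hd
    have h3 : 0 ≤ Real.log b := Real.log_nonneg hb1
    linarith
  have haexp : a ≤ Real.exp ε :=
    (Real.log_le_iff_le_exp (lt_of_lt_of_le one_pos ha1)).mp hla
  intro i
  by_cases hi : i ∈ E
  · have hvi : 0 < v i := mem_supp_iff.mp (hsv ▸ hi)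
    have hle : u i / v i ≤ a := Finset.le_sup' (fun i => u i / v i) hi
    have : u i / v i ≤ Real.exp ε := hle.trans haexp
    calc u i = u i / v i * v i := by field_simp
      _ ≤ Real.exp ε * v i := mul_le_mul_of_nonneg_right this hvi.le
  · have h1 : u i = 0 := by
      by_contra h
      exact hi (hsu ▸ mem_supp_iff.mpr (lt_of_le_of_ne (hu i) (Ne.symm h)))
    rw [h1]
    exact mul_nonneg (Real.exp_pos ε).le (hv i)

/-- For all sufficiently small `ε > 0`: vectors of equal norm and equal support at Hilbert
distance at most `ε` have live capital within `3ε‖u‖` of each other. -/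
theorem stmt12 {A : Type*} [Fintype A] [Nonempty A] {m : ℕ}
    (M : A → Matrix (Fin m) (Fin m) ℝ) (hM : ∀ a i j, 0 ≤ M a i j)
    (hsf : ∀ u : Fin m → ℝ, 0 ≤ u →
      ∑ a, l1 (Matrix.vecMul u (M a)) ≤ (Fintype.card A : ℝ) * l1 u) :
    ∃ ε₀ > 0, ∀ ε : ℝ, 0 < ε → ε ≤ ε₀ →
      ∀ (u v : Fin m → ℝ) (E : Finset (Fin m)) (hE : E.Nonempty),
        0 ≤ u → 0 ≤ v → l1 u = l1 v → supp u = E → supp v = E →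
        dH E hE u v ≤ ε →
        |Live M u - Live M v| ≤ 3 * ε * l1 u := by
  refine ⟨1/2, by norm_num, fun ε hε hε2 u v E hE hu hv hn hsu hsv hd => ?_⟩
  have hd' : dH E hE v u ≤ ε := by
    unfold dH at hd ⊢; linarith [hd, add_comm (Real.log (E.sup' hE fun i => u i / v i))
      (Real.log (E.sup' hE fun i => v i / u i))]
  have huv := dH_le_imp hE hu hv hn hsu hsv hd
  have hvu := dH_le_imp hE hv hu hn.symm hsv hsu hd'
  set c := Real.exp ε with hc
  have hc1 : 1 ≤ c := by
    rw [hc]; nlinarith [Real.add_one_le_exp ε]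
  have hcb : c - 1 ≤ 2 * ε := by
    have h1 : 1 - ε ≤ Real.exp (-ε) := by nlinarith [Real.add_one_le_exp (-ε)]
    have h2 : c * (1 - ε) ≤ 1 := by
      calc c * (1 - ε) ≤ c * Real.exp (-ε) :=
            mul_le_mul_of_nonneg_left h1 (Real.exp_pos ε).le
        _ = 1 := by rw [hc, ← Real.exp_add]; simp
    nlinarith
  have h1 : Ssup M u ≤ c * Ssup M v := Ssup_le_mul M hc1 hv huv
  have h2 : Ssup M v ≤ c * Ssup M u := Ssup_le_mul M hc1 hu hvu
  have h3 : Ssup M u ≤ l1 u := Ssup_le_l1 M hu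
  have h4 : Ssup M v ≤ l1 v := Ssup_le_l1 M hv
  have h5 : 0 ≤ Ssup M u := Ssup_nonneg M hu
  have h6 : 0 ≤ Ssup M v := Ssup_nonneg M hv
  have h7 : 0 ≤ l1 u := l1_nonneg u
  have hL : Live M u - Live M v = Ssup M v - Ssup M u := by
    unfold Live Ssup at *
    rw [hn]; ring
  rw [hL, abs_le]
  constructor <;> nlinarith
end

section
/- Let D be a probabilistic betting automaton with states S, stochastic transition function δ, betting function γ satisfying Σ_{a∈A} γ(s,a) = |A| for every state s, and capital process C_n^X defined against a fixed sequence X. Define the matrices M_a = D_a T_a, where D_a is diagonal with D_a(s,s) = γ(s,a) and T_a(s,s') = δ(s,a)(s'). Then the family (M_a)_{a∈A} is fair, and for every n, E[C_n^X] = || e_{s_0} M_{X[1]} ··· M_{X[n]} ||. -/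
open Matrix in
private lemma stmt18_nonneg {A S : Type*} [Fintype S] [DecidableEq S]
    (Mfam : A → Matrix S S ℝ) (hM : ∀ a s s', 0 ≤ Mfam a s s') :
    ∀ (L : List A) (v : S → ℝ), (∀ s, 0 ≤ v s) →
      ∀ s, 0 ≤ Matrix.vecMul v ((L.map Mfam).prod) s := by
  intro L
  induction L with
  | nil => intro v hv s; simpa using hv s
  | cons a L ih =>
    intro v hv s
    have : Matrix.vecMul v ((Mfam a) * (L.map Mfam).prod)
        = Matrix.vecMul (Matrix.vecMul v (Mfam a)) ((L.map Mfam).prod) :=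
      (Matrix.vecMul_vecMul v (Mfam a) _).symm
    simp only [List.map_cons, List.prod_cons, this]
    exact ih _ (fun t => by
      simp only [Matrix.vecMul, dotProduct]
      exact Finset.sum_nonneg fun i _ => mul_nonneg (hv i) (hM a i t)) s

private lemma stmt18_main {A S : Type*} [Fintype A] [Fintype S] [DecidableEq S]
    (δ : S → A → S → ℝ) (γ : S → A → ℝ)
    (Mfam : A → Matrix S S ℝ) (hMfam : ∀ a s s', Mfam a s s' = γ s a * δ s a s') :
    ∀ (n : ℕ) (X : ℕ → A) (v : S → ℝ),
      (∑ p : Fin (n + 1) → S,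
        v (p 0) * ((∏ k : Fin n, δ (p k.castSucc) (X k) (p k.succ)) *
            ∏ k : Fin n, γ (p k.castSucc) (X k))) =
      ∑ s, Matrix.vecMul v (((List.ofFn fun k : Fin n => X k).map Mfam).prod) s := by
  intro n
  induction n with
  | zero =>
    intro X v
    rw [Fintype.sum_equiv (Equiv.funUnique (Fin 1) S) _ (fun s => v s)
      (fun p => by simp)]
    simp [Matrix.vecMul_one]
  | succ n ih =>
    intro X v
    have hlist : (List.ofFn fun k : Fin (n+1) => X k)
        = X 0 :: List.ofFn (fun k : Fin n => X (k.succ)) := by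
      rw [List.ofFn_succ]; rfl
    rw [hlist]
    simp only [List.map_cons, List.prod_cons, ← Matrix.vecMul_vecMul, Fin.val_succ]
    rw [← ih (fun m => X (m + 1)) (Matrix.vecMul v (Mfam (X 0)))]
    rw [← Equiv.sum_comp (Fin.consEquiv (fun _ : Fin (n+2) => S))]
    rw [Fintype.sum_prod_type]
    rw [Finset.sum_comm]
    refine Finset.sum_congr rfl fun q _ => ?_
    have hv' : Matrix.vecMul v (Mfam (X 0)) (q 0)
        = ∑ s, v s * (γ s (X 0) * δ s (X 0) (q 0)) := by
      simp only [Matrix.vecMul, dotProduct, hMfam]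
    rw [hv', Finset.sum_mul]
    refine Finset.sum_congr rfl fun s _ => ?_
    have hδp : (∏ k : Fin (n+1),
        δ ((Fin.consEquiv fun _ : Fin (n+2) => S) (s, q) k.castSucc) (X k)
          ((Fin.consEquiv fun _ : Fin (n+2) => S) (s, q) k.succ))
        = δ s (X 0) (q 0) * ∏ k : Fin n, δ (q k.castSucc) (X (k + 1)) (q k.succ) := by
      rw [Fin.prod_univ_succ]
      refine congrArg₂ (· * ·) (by simp [Fin.consEquiv]) ?_
      refine Finset.prod_congr rfl fun k _ => ?_
      rw [show ((Fin.consEquiv fun _ : Fin (n+2) => S) (s, q)) = Fin.cons s q from rfl]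
      simp only [← Fin.succ_castSucc, Fin.cons_succ, Fin.val_succ]
    have hγp : (∏ k : Fin (n+1),
        γ ((Fin.consEquiv fun _ : Fin (n+2) => S) (s, q) k.castSucc) (X k))
        = γ s (X 0) * ∏ k : Fin n, γ (q k.castSucc) (X (k + 1)) := by
      rw [Fin.prod_univ_succ]
      refine congrArg₂ (· * ·) (by simp [Fin.consEquiv]) ?_
      refine Finset.prod_congr rfl fun k _ => ?_
      rw [show ((Fin.consEquiv fun _ : Fin (n+2) => S) (s, q)) = Fin.cons s q from rfl]
      simp only [← Fin.succ_castSucc, Fin.cons_succ, Fin.val_succ]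
    have h0 : (Fin.consEquiv fun _ : Fin (n+2) => S) (s, q) 0 = s := by
      simp [Fin.consEquiv]
    rw [hδp, hγp, h0]
    ring

/-- For a probabilistic betting automaton (stochastic transitions `δ`, fair bets `γ`),
the matrices `M_a(s,s') = γ(s,a) δ(s,a)(s')` form a fair family, and the expected capital
after `n` steps against `X` equals `‖e_{s₀} M_{X[1]} ⋯ M_{X[n]}‖₁`. The expectation is
written as a sum over state-paths of probability times capital. -/
theorem stmt18 {A S : Type*} [Fintype A] [Nonempty A] [Fintype S] [DecidableEq S]
    (δ : S → A → S → ℝ) (hδ0 : ∀ s a s', 0 ≤ δ s a s') (hδ1 : ∀ s a, ∑ s', δ s a s' = 1)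
    (γ : S → A → ℝ) (hγ0 : ∀ s a, 0 ≤ γ s a)
    (hγ1 : ∀ s, ∑ a, γ s a = (Fintype.card A : ℝ))
    (s₀ : S) (X : ℕ → A)
    (Mfam : A → Matrix S S ℝ) (hMfam : ∀ a s s', Mfam a s s' = γ s a * δ s a s') :
    (∀ v : S → ℝ, 0 ≤ v →
        ∑ s, |v s| = (∑ a, ∑ s, |Matrix.vecMul v (Mfam a) s|) / (Fintype.card A : ℝ)) ∧
    ∀ n : ℕ,
      (∑ p : Fin (n + 1) → S,
        if p 0 = s₀ then
          (∏ k : Fin n, δ (p k.castSucc) (X k) (p k.succ)) *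
            ∏ k : Fin n, γ (p k.castSucc) (X k)
        else 0) =
      ∑ s, |Matrix.vecMul (Pi.single s₀ (1 : ℝ))
          (((List.ofFn fun k : Fin n => X k).map Mfam).prod) s| := by
  have hM : ∀ a s s', 0 ≤ Mfam a s s' := fun a s s' => by
    rw [hMfam]; exact mul_nonneg (hγ0 s a) (hδ0 s a s')
  have hcard : (0 : ℝ) < (Fintype.card A : ℝ) := by
    exact_mod_cast Fintype.card_pos
  constructor
  · intro v hv
    have hvM : ∀ a s', 0 ≤ Matrix.vecMul v (Mfam a) s' := fun a s' =>
      Finset.sum_nonneg fun i _ => mul_nonneg (hv i) (hM a i s')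
    have : ∑ a, ∑ s, |Matrix.vecMul v (Mfam a) s|
        = (∑ s, |v s|) * (Fintype.card A : ℝ) := by
      calc ∑ a, ∑ s, |Matrix.vecMul v (Mfam a) s|
          = ∑ a, ∑ s', ∑ s, v s * (γ s a * δ s a s') := by
            refine Finset.sum_congr rfl fun a _ => Finset.sum_congr rfl fun s' _ => ?_
            rw [abs_of_nonneg (hvM a s')]
            simp only [Matrix.vecMul, dotProduct, hMfam]
        _ = ∑ a, ∑ s, v s * γ s a := by
            refine Finset.sum_congr rfl fun a _ => ?_
            rw [Finset.sum_comm]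
            refine Finset.sum_congr rfl fun s _ => ?_
            rw [← Finset.mul_sum, ← Finset.mul_sum, hδ1 s a, mul_one]
        _ = ∑ s, v s * ∑ a, γ s a := by
            rw [Finset.sum_comm]; simp [Finset.mul_sum]
        _ = (∑ s, |v s|) * (Fintype.card A : ℝ) := by
            rw [Finset.sum_mul]
            exact Finset.sum_congr rfl fun s _ => by
              rw [hγ1 s, abs_of_nonneg (hv s)]
    rw [this, mul_div_assoc, div_self (ne_of_gt hcard), mul_one]
  · intro n
    have hsingle : ∀ s : S, (0:ℝ) ≤ (Pi.single s₀ (1:ℝ) : S → ℝ) s := fun s => by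
      rcases eq_or_ne s s₀ with h | h <;> simp [Pi.single_apply, h]
    have hnn := stmt18_nonneg Mfam hM (List.ofFn fun k : Fin n => X k)
      (Pi.single s₀ (1:ℝ)) hsingle
    calc (∑ p : Fin (n + 1) → S,
        if p 0 = s₀ then
          (∏ k : Fin n, δ (p k.castSucc) (X k) (p k.succ)) *
            ∏ k : Fin n, γ (p k.castSucc) (X k)
        else 0)
        = ∑ p : Fin (n + 1) → S,
            (Pi.single s₀ (1:ℝ) : S → ℝ) (p 0) * ((∏ k : Fin n, δ (p k.castSucc) (X k) (p k.succ)) *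
              ∏ k : Fin n, γ (p k.castSucc) (X k)) := by
          refine Finset.sum_congr rfl fun p _ => ?_
          rcases eq_or_ne (p 0) s₀ with h | h <;>
            simp [Pi.single_apply, h]
      _ = ∑ s, Matrix.vecMul (Pi.single s₀ (1:ℝ))
            (((List.ofFn fun k : Fin n => X k).map Mfam).prod) s :=
          stmt18_main δ γ Mfam hMfam n X _
      _ = ∑ s, |Matrix.vecMul (Pi.single s₀ (1:ℝ))
            (((List.ofFn fun k : Fin n => X k).map Mfam).prod) s| :=
          Finset.sum_congr rfl fun s _ => (abs_of_nonneg (hnn s)).symm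
end
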